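/- arXiv:2103.11020 — 3 statements merged into one kernel-verified Lean document; each statement's English description precedes it below -/
import Mathlib

section
/- Let A = F⁻¹ Λ F with Λ diagonal having pairwise distinct entries, and let M = F Λ* F⁻¹. Then for every vector t ∈ ℂ^N there exists a polynomial P of degree < N such that P(M) = F · diag(t) · F⁻¹. Consequently, for all signals s, F · (t ⊙ s) = P(M) · (F s), where ⊙ is the entrywise (Hadamard) product. -/
open Matrix

/-! Conjugating by `F` turns the spectral shift `M = F L* F⁻¹` into the diagonal matrix of the
conjugated eigenvalues `c i = star (L i i)`, so a polynomial `P` satisfies `P(M) = F diag(t) F⁻¹`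
exactly when `P(c i) = t i` for all `i`. Since the `c i` are distinct, the Vandermonde matrix of
`c` is invertible and this interpolation problem has a solution of degree `< N`. -/

theorem Matrix.IsDiag.map_eq_diagonal {n α β : Type*} [DecidableEq n] [Zero α] [Zero β]
    {L : Matrix n n α} (hL : L.IsDiag) {f : α → β} (hf : f 0 = 0) :
    L.map f = diagonal fun i => f (L i i) := by
  conv_lhs => rw [← hL.diagonal_diag]
  exact diagonal_map hf

theorem Matrix.sum_smul_diagonal_pow {ι n R : Type*} [Fintype n] [DecidableEq n] [CommSemiring R]
    (s : Finset ι) (p : ι → R) (e : ι → ℕ) (c : n → R) :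
    ∑ k ∈ s, p k • diagonal c ^ e k = diagonal fun i => ∑ k ∈ s, p k * c i ^ e k := by
  simp only [diagonal_pow, ← diagonal_smul]
  change ∑ k ∈ s, diagonalAddMonoidHom n R (p k • c ^ e k) = _
  rw [← map_sum]
  exact congrArg (diagonalAddMonoidHom n R) (funext fun i => by simp [Finset.sum_apply])

theorem sum_smul_conj_pow {ι R A : Type*} [CommSemiring R] [Semiring A] [Algebra R A]
    {F G : A} (hGF : G * F = 1) (hFG : F * G = 1) (x : A) (s : Finset ι) (p : ι → R)
    (e : ι → ℕ) :
    ∑ k ∈ s, p k • (F * x * G) ^ e k = F * (∑ k ∈ s, p k • x ^ e k) * G := by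
  let u : Aˣ := ⟨F, G, hFG, hGF⟩
  simp only [Finset.mul_sum, Finset.sum_mul, mul_smul_comm, smul_mul_assoc]
  exact Finset.sum_congr rfl fun k _ => congrArg (p k • ·) (Units.conj_pow u x (e k))

theorem exists_sum_mul_pow_eq_of_injective {K : Type*} [Field K] {N : ℕ} {c : Fin N → K}
    (hc : Function.Injective c) (t : Fin N → K) :
    ∃ p : Fin N → K, ∀ i, ∑ k : Fin N, p k * c i ^ (k : ℕ) = t i := by
  have hV : IsUnit (vandermonde c) :=
    (isUnit_iff_isUnit_det _).2 (det_vandermonde_ne_zero_iff.2 hc).isUnit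
  obtain ⟨p, hp⟩ := mulVec_surjective_iff_isUnit.2 hV t
  refine ⟨p, fun i => ?_⟩
  simp only [← hp, mulVec, dotProduct, vandermonde_apply, mul_comm]

theorem mulVec_hadamard_eq_conj_diagonal_mulVec {n R : Type*} [Fintype n] [DecidableEq n]
    [CommSemiring R] {F G : Matrix n n R} (hGF : G * F = 1) (t s : n → R) :
    F *ᵥ (fun i => t i * s i) = (F * diagonal t * G) *ᵥ (F *ᵥ s) := by
  rw [mulVec_mulVec, mul_assoc, hGF, mul_one, ← mulVec_mulVec]
  congr 1
  ext i
  rw [mulVec_diagonal]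

theorem hadamard_is_LSI_spectral_filtering_general (N : ℕ)
    (F Finv L : Matrix (Fin N) (Fin N) ℂ)
    (hL : L.IsDiag) (hdist : Function.Injective fun i => L i i)
    (hFl : Finv * F = 1) (hFr : F * Finv = 1)
    (t : Fin N → ℂ) :
    ∃ p : Fin N → ℂ,
      (∑ n : Fin N, p n • (F * L.map (starRingEnd ℂ) * Finv) ^ (n : ℕ))
          = F * Matrix.diagonal t * Finv
        ∧ ∀ s : Fin N → ℂ,
            F.mulVec (fun i => t i * s i)
              = (∑ n : Fin N, p n • (F * L.map (starRingEnd ℂ) * Finv) ^ (n : ℕ)).mulVec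
                  (F.mulVec s) := by
  obtain ⟨p, hp⟩ := exists_sum_mul_pow_eq_of_injective
    ((starRingEnd ℂ).injective.comp hdist) t
  have hP : ∑ n : Fin N, p n • (F * L.map (starRingEnd ℂ) * Finv) ^ (n : ℕ)
      = F * diagonal t * Finv := by
    rw [hL.map_eq_diagonal (map_zero _), sum_smul_conj_pow hFl hFr, sum_smul_diagonal_pow]
    exact congrArg (fun D => F * diagonal D * Finv) (funext hp)
  exact ⟨p, hP, fun s => hP ▸ mulVec_hadamard_eq_conj_diagonal_mulVec hFl t s⟩

/-- With `A = Finv L F`, `L` diagonal with pairwise distinct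
diagonal entries, and spectral shift `M = F L* Finv`, for every `t` there is a
polynomial (of degree `< N`) `P` with `P(M) = F diag(t) Finv`; consequently
pointwise multiplication by `t` in the vertex domain is LSI filtering by
`P(M)` in the spectral domain. -/
theorem hadamard_is_LSI_spectral_filtering (N : ℕ)
    (A F Finv L : Matrix (Fin N) (Fin N) ℂ)
    (hL : L.IsDiag) (hdist : Function.Injective fun i => L i i)
    (hFl : Finv * F = 1) (hFr : F * Finv = 1)
    (hA : A = Finv * L * F) (t : Fin N → ℂ) :
    ∃ p : Fin N → ℂ,
      (∑ n : Fin N, p n • (F * L.map (starRingEnd ℂ) * Finv) ^ (n : ℕ))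
          = F * Matrix.diagonal t * Finv
        ∧ ∀ s : Fin N → ℂ,
            F.mulVec (fun i => t i * s i)
              = (∑ n : Fin N, p n • (F * L.map (starRingEnd ℂ) * Finv) ^ (n : ℕ)).mulVec
                  (F.mulVec s) :=
  hadamard_is_LSI_spectral_filtering_general N F Finv L hL hdist hFl hFr t
end

section
/- Let F be an invertible N×N matrix, K ≤ N, with the top-left K×K block F⁻¹_{KK} of F⁻¹ invertible. Then every signal s ∈ ℂ^N whose spectrum ŝ = F s has the form [ŝ_K; 0_{N−K}] is perfectly reconstructed from its first K samples s_K by s = F⁻¹ · [ (F⁻¹_{KK})⁻¹ s_K ; 0_{N−K} ]. Equivalently, s = [ I_K ; F⁻¹_{(N−K)K}·(F⁻¹_{KK})⁻¹ ] s_K, where F⁻¹_{(N−K)K} is the bottom-left block of F⁻¹. -/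
/-!
Since `F` is invertible, `s = F⁻¹ ŝ`, and as `ŝ` vanishes beyond its first `K` entries only the
first `K` columns of `F⁻¹` contribute: `s = F⁻¹_{·K} ŝ_K`. Reading off the first `K` rows gives
`s_K = F⁻¹_{KK} ŝ_K`, so `ŝ_K = (F⁻¹_{KK})⁻¹ s_K`; substituting this back recovers `ŝ` (hence `s`),
and reading off the last `N - K` rows gives the formula for the unsampled entries.
-/

open Matrix

theorem Matrix.comp_mulVec_eq_submatrix_mulVec_of_support {R l m n ι : Type*}
    [NonUnitalNonAssocSemiring R] [Fintype n] [Fintype ι]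
    (A : Matrix m n R) (f : l → m) {e : ι → n} (he : Function.Injective e) {v : n → R}
    (hv : ∀ j ∉ Set.range e, v j = 0) :
    (A *ᵥ v) ∘ f = A.submatrix f e *ᵥ (v ∘ e) := by
  funext i
  refine (Fintype.sum_of_injective e he _ _ (fun j hj => ?_) fun _ => rfl).symm
  rw [hv j hj, mul_zero]

/-- Perfect reconstruction. If the top-left `K×K` block
`F⁻¹_{KK}` of `F⁻¹` is invertible, then every signal `s` whose spectrum
`ŝ = F s` is supported on its first `K` entries is perfectly reconstructed
from its first `K` samples `s_K` by
`s = F⁻¹ [ (F⁻¹_{KK})⁻¹ s_K ; 0 ]`; equivalently the first `K` entries of `s`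
are `s_K` and the remaining entries are `F⁻¹_{(N−K)K} (F⁻¹_{KK})⁻¹ s_K`. -/
theorem perfect_reconstruction (N K : ℕ) (hK : K ≤ N)
    (F : Matrix (Fin N) (Fin N) ℂ) (hF : IsUnit F.det)
    (hKK : IsUnit ((F⁻¹).submatrix (Fin.castLE hK) (Fin.castLE hK)))
    (s : Fin N → ℂ) (hband : ∀ i : Fin N, K ≤ (i : ℕ) → F.mulVec s i = 0) :
    s = F⁻¹.mulVec (fun i : Fin N =>
        if h : (i : ℕ) < K then
          (((F⁻¹).submatrix (Fin.castLE hK) (Fin.castLE hK))⁻¹).mulVec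
            (fun k : Fin K => s (Fin.castLE hK k)) ⟨(i : ℕ), h⟩
        else 0)
      ∧ ∀ j : Fin (N - K),
          s ⟨K + (j : ℕ), by have := j.isLt; omega⟩
            = ((Matrix.of fun (r : Fin (N - K)) (c : Fin K) =>
                  F⁻¹ ⟨K + (r : ℕ), by have := r.isLt; omega⟩ (Fin.castLE hK c))
                * ((F⁻¹).submatrix (Fin.castLE hK) (Fin.castLE hK))⁻¹).mulVec
                (fun k : Fin K => s (Fin.castLE hK k)) j := by
  set B := (F⁻¹).submatrix (Fin.castLE hK) (Fin.castLE hK)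
  set ŝ := F *ᵥ s
  have hs : s = F⁻¹ *ᵥ ŝ := by rw [mulVec_mulVec, nonsing_inv_mul F hF, one_mulVec]
  have hsupp : ∀ i ∉ Set.range (Fin.castLE hK), ŝ i = 0 := fun i hi =>
    hband i (not_lt.mp fun h => hi ⟨⟨i, h⟩, rfl⟩)
  have hrows {l : Type} (f : l → Fin N) :
      s ∘ f = F⁻¹.submatrix f (Fin.castLE hK) *ᵥ (ŝ ∘ Fin.castLE hK) := by
    rw [hs]
    exact F⁻¹.comp_mulVec_eq_submatrix_mulVec_of_support f (Fin.castLE_injective hK) hsupp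
  have hspectrum : B⁻¹ *ᵥ (s ∘ Fin.castLE hK) = ŝ ∘ Fin.castLE hK := by
    rw [hrows, mulVec_mulVec, nonsing_inv_mul B ((isUnit_iff_isUnit_det B).mp hKK), one_mulVec]
  refine ⟨?_, fun j => ?_⟩
  · convert hs using 2
    ext i
    split_ifs with h
    · exact congrFun hspectrum ⟨i, h⟩
    · exact (hband i (not_lt.mp h)).symm
  · rw [← mulVec_mulVec]
    exact (congrFun (hrows fun r : Fin (N - K) => ⟨K + r, by omega⟩) j).trans
      (congrArg (fun v => (_ *ᵥ v) j) hspectrum.symm)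
end

section
/- Let F be invertible N×N, K ≤ N, δ = [1_K; 0_{N−K}], P = F diag(δ) F⁻¹, and suppose Q is an N×N matrix whose top K×N block Q_K satisfies Q_K · P_K = I_K where P_K = F_K F⁻¹_{KK}. Then for every bandlimited ŝ = [ŝ_K; 0], we have [1_K;0] ⊙ (Q · P · ŝ) = [ŝ_K; 0]; consequently s = F⁻¹ · ([1_K;0] ⊙ Q · ŝ_δ) where ŝ_δ = P ŝ is the spectrum of the subsampled signal. -/
/-!
Let `E` pad a vector on the first `K` frequencies with zeros and `R` restrict to them, so the
ideal lowpass filter is `diag δ = E R` and a bandlimited spectrum is `E ŝ_K`. Then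
`P E = (F E)(R F⁻¹ E) = P_K`, hence `diag δ · Q P E ŝ_K = E (R Q) P_K ŝ_K = E (Q_K P_K) ŝ_K = E ŝ_K`;
applying `F⁻¹` gives the reconstruction formula.
-/

open Matrix Function

namespace Matrix

variable {ι κ m : Type*} (R : Type*) [DecidableEq ι] [Semiring R]

def zeroExtend (e : κ → ι) : Matrix ι κ R := (1 : Matrix ι ι R).submatrix id e

def restrict (e : κ → ι) : Matrix κ ι R := (1 : Matrix ι ι R).submatrix e id

variable {R}

theorem mul_zeroExtend [Fintype ι] (A : Matrix m ι R) (e : κ → ι) :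
    A * zeroExtend R e = A.submatrix id e :=
  mul_submatrix_one (Equiv.refl ι) e A

theorem restrict_mul [Fintype ι] (A : Matrix ι m R) (e : κ → ι) :
    restrict R e * A = A.submatrix e id :=
  one_submatrix_mul e (Equiv.refl ι) A

theorem zeroExtend_mulVec [Fintype κ] {e : κ → ι} (he : Injective e) (s : κ → R) :
    zeroExtend R e *ᵥ s = extend e s 0 := by
  classical
  funext i
  by_cases hi : ∃ k, e k = i
  · obtain ⟨k, rfl⟩ := hi
    simp [zeroExtend, mulVec, dotProduct, one_apply, he.eq_iff, he.extend_apply]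
  · rw [extend_apply' _ _ _ hi]
    push Not at hi
    simp [zeroExtend, mulVec, dotProduct, Ne.symm (hi _)]

theorem zeroExtend_mul_restrict [Fintype κ] {e : κ → ι} (he : Injective e) :
    zeroExtend R e * restrict R e = diagonal ((Set.range e).indicator (1 : ι → R)) := by
  classical
  ext i j
  by_cases hj : j ∈ Set.range e
  · obtain ⟨k, rfl⟩ := hj
    simp only [zeroExtend, restrict, mul_apply, submatrix_apply, id, one_apply, he.eq_iff,
      diagonal_apply]
    split_ifs with hik
    · subst hik
      simp
    · simp [hik]
  · have hne : ∀ k, e k ≠ j := fun k hk => hj ⟨k, hk⟩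
    simp only [zeroExtend, restrict, mul_apply, submatrix_apply, id, one_apply, hne,
      if_false, mul_zero, Finset.sum_const_zero, diagonal_apply]
    split_ifs with hij
    · rw [hij, Set.indicator_of_notMem hj]
    · rfl

theorem submatrix_id_mul_diagonal_indicator_mul [Fintype ι] [Fintype κ] {e : κ → ι}
    (he : Injective e) (F : Matrix m ι R) (G : Matrix ι ι R) :
    (F * diagonal ((Set.range e).indicator (1 : ι → R)) * G).submatrix id e =
      F.submatrix id e * G.submatrix e e := by
  rw [← zeroExtend_mul_restrict he, ← mul_zeroExtend, Matrix.mul_assoc, Matrix.mul_assoc,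
    mul_zeroExtend, Matrix.mul_assoc, restrict_mul, ← Matrix.mul_assoc, mul_zeroExtend,
    submatrix_submatrix]
  rfl

theorem diagonal_indicator_mulVec_extend_of_submatrix_mul_eq_one [Fintype ι] [Fintype κ] [DecidableEq κ]
    {e : κ → ι} (he : Injective e) (F G Q : Matrix ι ι R)
    (hQ : Q.submatrix e id * (F.submatrix id e * G.submatrix e e) = 1) (s : κ → R) :
    diagonal ((Set.range e).indicator (1 : ι → R)) *ᵥ
        (Q *ᵥ ((F * diagonal ((Set.range e).indicator (1 : ι → R)) * G) *ᵥ extend e s 0)) =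
      extend e s 0 := by
  have hPE := submatrix_id_mul_diagonal_indicator_mul he F G
  rw [← mul_zeroExtend] at hPE
  rw [← zeroExtend_mulVec he, mulVec_mulVec _ _ (zeroExtend R e), hPE, mulVec_mulVec,
    mulVec_mulVec, ← zeroExtend_mul_restrict he, Matrix.mul_assoc (zeroExtend R e),
    restrict_mul, Matrix.mul_assoc, hQ, Matrix.mul_one]

end Matrix

theorem Fin.extend_castLE_zero {R : Type*} [Zero R] {K N : ℕ} (hK : K ≤ N) (s : Fin K → R) :
    extend (Fin.castLE hK) s 0 =
      fun i : Fin N => if h : (i : ℕ) < K then s ⟨i, h⟩ else 0 := by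
  funext i
  split_ifs with h
  · exact (Fin.castLE_injective hK).extend_apply s 0 ⟨i, h⟩
  · refine extend_apply' _ _ _ fun ⟨k, hk⟩ => h ?_
    rw [← hk]
    exact k.isLt

theorem Fin.indicator_range_castLE {R : Type*} [Zero R] [One R] {K N : ℕ} (hK : K ≤ N) :
    (Set.range (Fin.castLE hK)).indicator (1 : Fin N → R) =
      fun n : Fin N => if (n : ℕ) < K then 1 else 0 := by
  funext n
  simp [Fin.range_castLE, Set.indicator_apply]

theorem reconstruction_by_spectral_filtering_general (N K : ℕ) (hK : K ≤ N)
    (F : Matrix (Fin N) (Fin N) ℂ)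
    (Q : Matrix (Fin N) (Fin N) ℂ)
    (hQ : (Q.submatrix (Fin.castLE hK) id)
        * ((F.submatrix id (Fin.castLE hK))
            * ((F⁻¹).submatrix (Fin.castLE hK) (Fin.castLE hK))) = 1)
    (sK : Fin K → ℂ) :
    (fun i : Fin N => (if (i : ℕ) < K then (1 : ℂ) else 0)
        * (Q.mulVec ((F * Matrix.diagonal (fun n : Fin N => if (n : ℕ) < K then (1 : ℂ) else 0)
            * F⁻¹).mulVec (fun i : Fin N => if h : (i : ℕ) < K then sK ⟨(i : ℕ), h⟩ else 0))) i)
      = (fun i : Fin N => if h : (i : ℕ) < K then sK ⟨(i : ℕ), h⟩ else 0)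
    ∧ F⁻¹.mulVec (fun i : Fin N => (if (i : ℕ) < K then (1 : ℂ) else 0)
        * (Q.mulVec ((F * Matrix.diagonal (fun n : Fin N => if (n : ℕ) < K then (1 : ℂ) else 0)
            * F⁻¹).mulVec (fun i : Fin N => if h : (i : ℕ) < K then sK ⟨(i : ℕ), h⟩ else 0))) i)
      = F⁻¹.mulVec (fun i : Fin N => if h : (i : ℕ) < K then sK ⟨(i : ℕ), h⟩ else 0) := by
  have recovered :=
    diagonal_indicator_mulVec_extend_of_submatrix_mul_eq_one (Fin.castLE_injective hK) F F⁻¹ Q hQ sK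
  rw [Fin.indicator_range_castLE, Fin.extend_castLE_zero,
    show ∀ v w : Fin N → ℂ, diagonal v *ᵥ w = fun i => v i * w i from
      fun v w => funext (mulVec_diagonal v w)] at recovered
  exact ⟨recovered, by rw [recovered]⟩

/-- Reconstruction by spectral filtering. If the top `K×N` block
`Q_K` of a spectral filter `Q` satisfies `Q_K · P_K = I_K` with
`P_K = F_K F⁻¹_{KK}` (the first `K` columns of `P = F diag(δ) F⁻¹`), then for
every bandlimited `ŝ = [ŝ_K; 0]`: `[1_K;0] ⊙ (Q P ŝ) = ŝ`, and consequently
`s = F⁻¹ ([1_K;0] ⊙ Q ŝ_δ)` where `ŝ_δ = P ŝ`. -/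
theorem reconstruction_by_spectral_filtering (N K : ℕ) (hK : K ≤ N)
    (F : Matrix (Fin N) (Fin N) ℂ) (hF : IsUnit F.det)
    (Q : Matrix (Fin N) (Fin N) ℂ)
    (hQ : (Q.submatrix (Fin.castLE hK) id)
        * ((F.submatrix id (Fin.castLE hK))
            * ((F⁻¹).submatrix (Fin.castLE hK) (Fin.castLE hK))) = 1)
    (sK : Fin K → ℂ) :
    (fun i : Fin N => (if (i : ℕ) < K then (1 : ℂ) else 0)
        * (Q.mulVec ((F * Matrix.diagonal (fun n : Fin N => if (n : ℕ) < K then (1 : ℂ) else 0)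
            * F⁻¹).mulVec (fun i : Fin N => if h : (i : ℕ) < K then sK ⟨(i : ℕ), h⟩ else 0))) i)
      = (fun i : Fin N => if h : (i : ℕ) < K then sK ⟨(i : ℕ), h⟩ else 0)
    ∧ F⁻¹.mulVec (fun i : Fin N => (if (i : ℕ) < K then (1 : ℂ) else 0)
        * (Q.mulVec ((F * Matrix.diagonal (fun n : Fin N => if (n : ℕ) < K then (1 : ℂ) else 0)
            * F⁻¹).mulVec (fun i : Fin N => if h : (i : ℕ) < K then sK ⟨(i : ℕ), h⟩ else 0))) i)
      = F⁻¹.mulVec (fun i : Fin N => if h : (i : ℕ) < K then sK ⟨(i : ℕ), h⟩ else 0) :=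
  reconstruction_by_spectral_filtering_general N K hK F Q hQ sK
end
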